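/- Suppose 𝒮' ⊆ 𝒮 ⊆ 𝒳, 𝒮' is upward closed with respect to 𝒮, and 𝒮 is component maximal in 𝒳 with 𝒮-maximal subsets {𝒟_X}. Then 𝒮' is component maximal in 𝒳, with 𝒮'-maximal subsets 𝒟'_X := 𝒟_X ∩ 𝒮' for each X ∈ 𝒳. -/

import Mathlib

open Classical

universe u

/-- A (finite) hypergraph over a vertex universe `V`: a finite vertex set together with a
finite set of nonempty hyperedges, each a subset of the vertex set. -/
structure FinHypergraph (V : Type u) where
  verts : Set V
  edges : Set (Set V)
  verts_finite : verts.Finite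
  edges_finite : edges.Finite
  edge_sub : ∀ e ∈ edges, e ⊆ verts
  edge_nonempty : ∀ e ∈ edges, e.Nonempty

namespace FinHypergraph

variable {V : Type u}

/-- The null hypergraph `𝒩`. -/
def Null : FinHypergraph V :=
  ⟨∅, ∅, Set.finite_empty, Set.finite_empty, by simp, by simp⟩

/-- Direct sum (hypergraph union) of two hypergraphs. -/
def dSum (X Y : FinHypergraph V) : FinHypergraph V where
  verts := X.verts ∪ Y.verts
  edges := X.edges ∪ Y.edges
  verts_finite := X.verts_finite.union Y.verts_finite
  edges_finite := X.edges_finite.union Y.edges_finite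
  edge_sub := by
    rintro e (he | he)
    · exact (X.edge_sub e he).trans Set.subset_union_left
    · exact (Y.edge_sub e he).trans Set.subset_union_right
  edge_nonempty := by
    rintro e (he | he)
    · exact X.edge_nonempty e he
    · exact Y.edge_nonempty e he

/-- Direct sum of a set of (pairwise disjoint) hypergraphs; the null hypergraph when the
unions fail to be finite.  The direct sum of the empty set is the null hypergraph. -/
noncomputable def bigSum (A : Set (FinHypergraph V)) : FinHypergraph V :=
  if h : (⋃ X ∈ A, X.verts).Finite ∧ (⋃ X ∈ A, X.edges).Finite then
    { verts := ⋃ X ∈ A, X.verts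
      edges := ⋃ X ∈ A, X.edges
      verts_finite := h.1
      edges_finite := h.2
      edge_sub := by
        intro e he
        simp only [Set.mem_iUnion] at he
        obtain ⟨X, hX, heX⟩ := he
        intro v hv
        simp only [Set.mem_iUnion]
        exact ⟨X, hX, X.edge_sub e heX hv⟩
      edge_nonempty := by
        intro e he
        simp only [Set.mem_iUnion] at he
        obtain ⟨X, hX, heX⟩ := he
        exact X.edge_nonempty e heX }
  else Null

/-- The direct difference `X ⊖ Z`: the unique hypergraph `W` vertex disjoint from `Z`
with `X = W ⊕ Z`, when it exists. -/
noncomputable def dDiff (X Z : FinHypergraph V) : FinHypergraph V :=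
  if h : ∃ W : FinHypergraph V, Disjoint W.verts Z.verts ∧ X = dSum W Z then h.choose else X

/-- Two vertices are connected in `X` if there is a walk between them. -/
def Connected (X : FinHypergraph V) (a b : V) : Prop :=
  a ∈ X.verts ∧ Relation.ReflTransGen (fun u w => ∃ e ∈ X.edges, u ∈ e ∧ w ∈ e) a b

/-- `C` is a connected component of `X`: its vertex set is a connectivity class of `X`
and its edges are the edges of `X` lying inside it. -/
def IsComponent (X C : FinHypergraph V) : Prop :=
  (∃ v ∈ X.verts, C.verts = {w | Connected X v w}) ∧
  C.edges = {e ∈ X.edges | e ⊆ C.verts}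

/-- The set `𝒞(X)` of connected components of `X`. -/
def comps (X : FinHypergraph V) : Set (FinHypergraph V) := {C | IsComponent X C}

/-- Component disjointness: `𝒞(X) ∩ 𝒞(Y) = ∅`. -/
def CompDisjoint (X Y : FinHypergraph V) : Prop := comps X ∩ comps Y = ∅

/-- `X ∧ H`: the union (direct sum) of the components of `X` meeting some hyperedge in `H`. -/
noncomputable def wedge (X : FinHypergraph V) (H : Set (Set V)) : FinHypergraph V :=
  bigSum {C ∈ comps X | ∃ f ∈ H, (f ∩ C.verts).Nonempty}

/-- `𝒮` is component maximal in `𝒳` with `𝒮`-maximal subsets given by `D`. -/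
def IsMaximalSubsets (dom S : Set (FinHypergraph V))
    (D : FinHypergraph V → Set (FinHypergraph V)) : Prop :=
  ∀ X ∈ dom,
    D X ⊆ S ∧
    (D X).Pairwise CompDisjoint ∧
    (Null ∈ S → Null ∈ D X) ∧
    (∀ T ∈ D X, comps T ⊆ comps X) ∧
    (∀ s ∈ S, comps s ⊆ comps X → ∃ T ∈ D X, comps s ⊆ comps T)

/-- `𝒮_X := { S ∈ 𝒟_X | V(π(S)) ∩ V(X ⊖ S) = ∅ }`. -/
noncomputable def SXof (π : FinHypergraph V → FinHypergraph V)
    (D : FinHypergraph V → Set (FinHypergraph V)) (X : FinHypergraph V) : Set (FinHypergraph V) :=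
  {s ∈ D X | Disjoint (π s).verts (dDiff X s).verts}

/-- `(𝒳, π, 𝒮)` (with `𝒮`-maximal subsets `D`) is a hypergraph transformation:
nonredundancy, component maximality, and preservation of the direct sum decomposition. -/
def IsHGT (dom : Set (FinHypergraph V)) (π : FinHypergraph V → FinHypergraph V)
    (S : Set (FinHypergraph V)) (D : FinHypergraph V → Set (FinHypergraph V)) : Prop :=
  (∀ s ∈ S, comps s ∩ comps (π s) = ∅) ∧
  (Null ∈ S → π Null ≠ Null) ∧
  IsMaximalSubsets dom S D ∧
  ∀ X ∈ dom,
    (π '' SXof π D X).Pairwise (fun A B => Disjoint A.verts B.verts) ∧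
    Set.InjOn π (SXof π D X) ∧
    π X = dSum (dDiff X (bigSum (SXof π D X))) (bigSum (π '' SXof π D X))

/-- `𝒮'` is upward closed with respect to `𝒮`. -/
def UpwardClosed (S' S : Set (FinHypergraph V)) : Prop :=
  ∀ s ∈ S', ∀ t ∈ S, comps s ⊆ comps t → t ∈ S'

end FinHypergraph

open FinHypergraph

theorem stmt14_general {V : Type u} (𝒳 S S' : Set (FinHypergraph V))
    (h1 : S' ⊆ S) (hup : UpwardClosed S' S)
    (D : FinHypergraph V → Set (FinHypergraph V)) (hD : IsMaximalSubsets 𝒳 S D) :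
    IsMaximalSubsets 𝒳 S' (fun X => D X ∩ S') := by
  intro X hX
  obtain ⟨hDS, hdisj, hnull, hcomps, hcover⟩ := hD X hX
  refine ⟨Set.inter_subset_right, hdisj.mono Set.inter_subset_left,
    fun hN => ⟨hnull (h1 hN), hN⟩, fun T hT => hcomps T hT.1, ?_⟩
  intro s hs hsX
  obtain ⟨T, hT, hsT⟩ := hcover s (h1 hs) hsX
  exact ⟨T, ⟨hT, hup s hs T (hDS hT) hsT⟩, hsT⟩

theorem stmt14 {V : Type u} (𝒳 S S' : Set (FinHypergraph V))
    (h1 : S' ⊆ S) (h2 : S ⊆ 𝒳) (hup : UpwardClosed S' S)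
    (D : FinHypergraph V → Set (FinHypergraph V)) (hD : IsMaximalSubsets 𝒳 S D) :
    IsMaximalSubsets 𝒳 S' (fun X => D X ∩ S') :=
  stmt14_general 𝒳 S S' h1 hup D hD
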